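/- For four points on the unit circle at angles 0 ≤ θ₁ < θ₂ < θ₃ < θ₄ < 2π, with r_{jk} = 2 sin((θ_k − θ_j)/2) for j < k, and any α > 0: 1/r₁₃^α + 1/r₂₄^α < 1/r₁₄^α + 1/r₂₃^α. -/

import Mathlib

/-!
The function `φ x = 1 / (2 sin x) ^ α` is strictly convex on `(0, π)`: `2 sin` is strictly
concave and positive there, and `u ↦ 1 / u ^ α = exp (-α log u)` is convex and strictly
decreasing on `(0, ∞)`. With the half-angles `a = (θ₃ - θ₂)/2 < p = (θ₃ - θ₁)/2,
q = (θ₄ - θ₂)/2 < b = (θ₄ - θ₁)/2` we have `p + q = a + b`, and for a strictly convex function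
moving two points apart with fixed sum strictly increases `φ p + φ q`.
-/

open Real Set

theorem convexOn_one_div_rpow {α : ℝ} (hα : 0 ≤ α) :
    ConvexOn ℝ (Ioi 0) fun u : ℝ => 1 / u ^ α := by
  have hlog : ConvexOn ℝ (Ioi 0) fun u => α * -log u :=
    strictConcaveOn_log_Ioi.concaveOn.neg.smul hα
  have hconv : Convex ℝ ((fun u => α * -log u) '' Ioi 0) :=
    (isPreconnected_Ioi.image _ fun u hu =>
      ((continuousAt_log (ne_of_gt hu)).neg.const_mul α).continuousWithinAt).convex
  refine (convexOn_exp.subset (subset_univ _) hconv |>.comp hlog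
    (exp_monotone.monotoneOn _)).congr fun u hu => ?_
  simp only [Function.comp_apply, one_div, rpow_def_of_pos hu, mul_neg, exp_neg, mul_comm]

theorem StrictConcaveOn.strictConvexOn_one_div_rpow {E : Type*} [AddCommGroup E] [Module ℝ E]
    {s : Set E} {f : E → ℝ} {α : ℝ} (hf : StrictConcaveOn ℝ s f) (hpos : ∀ x ∈ s, 0 < f x)
    (hα : 0 < α) : StrictConvexOn ℝ s fun x => 1 / f x ^ α := by
  refine ⟨hf.1, fun x hx y hy hxy a b ha hb hab => ?_⟩
  have hconc : a • f x + b • f y < f (a • x + b • y) := hf.2 hx hy hxy ha hb hab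
  have hmix : 0 < a • f x + b • f y :=
    add_pos (mul_pos ha (hpos x hx)) (mul_pos hb (hpos y hy))
  calc 1 / f (a • x + b • y) ^ α < 1 / (a • f x + b • f y) ^ α :=
        one_div_lt_one_div_of_lt (rpow_pos_of_pos hmix α) (rpow_lt_rpow hmix.le hconc hα)
    _ ≤ a • (1 / f x ^ α) + b • (1 / f y ^ α) :=
        (convexOn_one_div_rpow hα.le).2 (hpos x hx) (hpos y hy) ha.le hb.le hab

theorem StrictConvexOn.add_lt_add_of_add_eq {𝕜 β : Type*} [Field 𝕜] [LinearOrder 𝕜]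
    [IsStrictOrderedRing 𝕜] [AddCommGroup β] [PartialOrder β] [IsOrderedCancelAddMonoid β]
    [Module 𝕜 β] {s : Set 𝕜} {f : 𝕜 → β} (hf : StrictConvexOn 𝕜 s f) {a b p q : 𝕜}
    (ha : a ∈ s) (hb : b ∈ s) (hap : a < p) (hpb : p < b) (hsum : p + q = a + b) :
    f p + f q < f a + f b := by
  set t := (b - p) / (b - a)
  have hba : 0 < b - a := sub_pos.2 (hap.trans hpb)
  have ht₀ : 0 < t := div_pos (sub_pos.2 hpb) hba
  have ht₁ : 0 < 1 - t := by
    rw [sub_pos]; exact (div_lt_one hba).2 (by linarith)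
  have hp : t • a + (1 - t) • b = p := by
    simp only [smul_eq_mul, t]; field_simp; ring
  have hq : (1 - t) • a + t • b = q := by
    simp only [smul_eq_mul] at hp ⊢; linear_combination -hsum - hp
  have hne : a ≠ b := (hap.trans hpb).ne
  have hfp := hf.2 ha hb hne ht₀ ht₁ (add_sub_cancel t 1)
  have hfq := hf.2 ha hb hne ht₁ ht₀ (sub_add_cancel 1 t)
  rw [hp] at hfp
  rw [hq] at hfq
  calc f p + f q < (t • f a + (1 - t) • f b) + ((1 - t) • f a + t • f b) := add_lt_add hfp hfq
    _ = f a + f b := by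
      rw [add_add_add_comm, ← add_smul, ← add_smul, add_sub_cancel, sub_add_cancel, one_smul,
        one_smul]

theorem strictConvexOn_one_div_two_mul_sin_rpow {α : ℝ} (hα : 0 < α) :
    StrictConvexOn ℝ (Ioo 0 π) fun x => 1 / (2 * sin x) ^ α := by
  have hsin : StrictConcaveOn ℝ (Ioo 0 π) sin :=
    strictConcaveOn_sin_Icc.subset Ioo_subset_Icc_self (convex_Ioo 0 π)
  refine StrictConcaveOn.strictConvexOn_one_div_rpow ((hsin.add hsin).congr fun x _ => ?_)
    (fun x hx => mul_pos two_pos (sin_pos_of_pos_of_lt_pi hx.1 hx.2)) hα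
  exact (two_mul _).symm

/-- For four points on the unit circle at angles `0 ≤ θ₁ < θ₂ < θ₃ < θ₄ < 2π`,
with `r_{jk} = 2 sin((θ_k − θ_j)/2)`, and any `α > 0`:
`1/r₁₃^α + 1/r₂₄^α < 1/r₁₄^α + 1/r₂₃^α`. -/
theorem stmt_5 (α θ₁ θ₂ θ₃ θ₄ : ℝ) (hα : 0 < α)
    (h0 : 0 ≤ θ₁) (h12 : θ₁ < θ₂) (h23 : θ₂ < θ₃) (h34 : θ₃ < θ₄) (h4 : θ₄ < 2 * Real.pi)
    (r : ℝ → ℝ → ℝ) (hr : ∀ x y, r x y = 2 * Real.sin ((y - x) / 2)) :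
    1 / r θ₁ θ₃ ^ α + 1 / r θ₂ θ₄ ^ α < 1 / r θ₁ θ₄ ^ α + 1 / r θ₂ θ₃ ^ α := by
  simp only [hr]
  exact ((strictConvexOn_one_div_two_mul_sin_rpow hα).add_lt_add_of_add_eq
    (⟨by linarith, by linarith⟩ : (θ₃ - θ₂) / 2 ∈ Ioo 0 π)
    (⟨by linarith, by linarith⟩ : (θ₄ - θ₁) / 2 ∈ Ioo 0 π)
    (by linarith) (by linarith) (by ring)).trans_eq (add_comm _ _)
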